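/- Every pure Nash equilibrium network of the adversarial network creation game with α < ∞ is 2-edge-connected (as a multigraph), since any bridge would give some agent infinite expected distance cost that it could avoid. -/

import Mathlib

open scoped BigOperators ENNReal

/-- A walk of length `n` between two vertices under step relation `r`. -/
def walkLen {V : Type*} (r : V → V → Prop) : ℕ → V → V → Prop
  | 0, u, v => u = v
  | (n+1), u, v => ∃ w, r u w ∧ walkLen r n w v

/-- Adjacency in a multigraph given by a multiset of (undirected) edges. -/
def mAdj {V : Type*} (m : Multiset (Sym2 V)) (u v : V) : Prop := s(u, v) ∈ m

/-- Hop-count distance (possibly infinite) in a multigraph. -/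
noncomputable def medist {V : Type*} (m : Multiset (Sym2 V)) (u v : V) : ℕ∞ :=
  sInf ((fun n : ℕ => (n : ℕ∞)) '' {n | walkLen (mAdj m) n u v})

/-- Expected distance cost (in `ℝ≥0∞`) of vertex `u` in a multigraph under uniform random
deletion of one edge (if there are no edges, the plain distance cost). -/
noncomputable def evCost {V : Type*} [DecidableEq V] [Fintype V]
    (m : Multiset (Sym2 V)) (u : V) : ℝ≥0∞ :=
  if Multiset.card m = 0 then ∑ v : V, ((medist m u v : ℕ∞) : ℝ≥0∞)
  else (Multiset.card m : ℝ≥0∞)⁻¹ *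
    (m.map (fun e => ∑ v : V, ((medist (m.erase e) u v : ℕ∞) : ℝ≥0∞))).sum

/-- The multigraph built from a strategy profile of the network creation game. -/
def edgeMS {n : ℕ} (s : Fin n → Multiset (Fin n)) : Multiset (Sym2 (Fin n)) :=
  ∑ u : Fin n, (s u).map (fun v => s(u, v))

/-- Cost of agent `u`: `α` per owned edge plus expected distance cost. -/
noncomputable def agentCost {n : ℕ} (α : ℝ≥0∞) (s : Fin n → Multiset (Fin n)) (u : Fin n) :
    ℝ≥0∞ :=
  α * (Multiset.card (s u) : ℝ≥0∞) + evCost (edgeMS s) u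

/-- Pure Nash equilibrium: no agent can strictly decrease its cost by a unilateral change
of the multiset of edges it owns (an agent may not buy edges to itself). -/
def IsNE {n : ℕ} (α : ℝ≥0∞) (s : Fin n → Multiset (Fin n)) : Prop :=
  ∀ u : Fin n, ∀ t : Multiset (Fin n), u ∉ t →
    agentCost α s u ≤ agentCost α (Function.update s u t) u

/-- Connectivity of a multigraph given by a multiset of edges. -/
def mConnected {V : Type*} (m : Multiset (Sym2 V)) : Prop :=
  ∀ u v : V, ∃ k : ℕ, walkLen (mAdj m) k u v

/-! An agent's expected distance cost is finite exactly when it reaches every vertex, both in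
the network and after the deletion of any single edge. Buying two parallel edges to every other
agent guarantees this at finite price `α`, so in an equilibrium every agent's cost is finite,
which for all agents together is 2-edge-connectivity. -/

lemma ENNReal.multiset_sum_map_ne_top_iff {ι : Type*} {m : Multiset ι} {f : ι → ℝ≥0∞} :
    (m.map f).sum ≠ ⊤ ↔ ∀ i ∈ m, f i ≠ ⊤ := by
  induction m using Multiset.induction with
  | empty => simp
  | cons a m ih =>
    rw [Multiset.map_cons, Multiset.sum_cons, ENNReal.add_ne_top, ih, Multiset.forall_mem_cons]

lemma ENNReal.mul_ne_top_iff_right {a b : ℝ≥0∞} (ha₀ : a ≠ 0) (ha : a ≠ ⊤) :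
    a * b ≠ ⊤ ↔ b ≠ ⊤ := by
  simp [ENNReal.mul_eq_top, ha₀, ha]

lemma Multiset.mem_erase_of_two_le_count {α : Type*} [DecidableEq α] {a : α} {m : Multiset α}
    (h : 2 ≤ m.count a) (e : α) : a ∈ m.erase e := by
  rw [← Multiset.one_le_count_iff_mem]
  rcases eq_or_ne a e with rfl | hne
  · rw [Multiset.count_erase_self]; omega
  · rw [Multiset.count_erase_of_ne hne]; omega

lemma walkLen_mono {V : Type*} {r r' : V → V → Prop} (h : ∀ a b, r a b → r' a b) :
    ∀ k u v, walkLen r k u v → walkLen r' k u v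
  | 0, _, _, hw => hw
  | k + 1, _, v, ⟨w, hr, hw⟩ => ⟨w, h _ _ hr, walkLen_mono h k w v hw⟩

lemma exists_walkLen_of_forall_mem {V : Type*} {m : Multiset (Sym2 V)} {u : V}
    (h : ∀ v, v ≠ u → s(u, v) ∈ m) (v : V) : ∃ k, walkLen (mAdj m) k u v := by
  rcases eq_or_ne v u with rfl | hv
  · exact ⟨0, rfl⟩
  · exact ⟨1, v, h v hv, rfl⟩

lemma medist_ne_top_iff {V : Type*} {m : Multiset (Sym2 V)} {u v : V} :
    medist m u v ≠ ⊤ ↔ ∃ k, walkLen (mAdj m) k u v := by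
  simp [medist, sInf_eq_top]

lemma sum_medist_ne_top_iff {V : Type*} [Fintype V] {m : Multiset (Sym2 V)} {u : V} :
    ∑ v : V, ((medist m u v : ℕ∞) : ℝ≥0∞) ≠ ⊤ ↔ ∀ v, ∃ k, walkLen (mAdj m) k u v := by
  simp only [ENNReal.sum_ne_top, Finset.mem_univ, forall_const, ENat.toENNReal_ne_top,
    medist_ne_top_iff]

theorem evCost_ne_top_iff {V : Type*} [DecidableEq V] [Fintype V]
    (m : Multiset (Sym2 V)) (u : V) :
    evCost m u ≠ ⊤ ↔ (∀ v, ∃ k, walkLen (mAdj m) k u v) ∧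
      ∀ e ∈ m, ∀ v, ∃ k, walkLen (mAdj (m.erase e)) k u v := by
  rcases eq_or_ne m 0 with rfl | hm
  · rw [evCost, if_pos Multiset.card_zero, sum_medist_ne_top_iff]
    simp
  have hcard : Multiset.card m ≠ 0 := by simpa using hm
  have hinv_ne_zero : (Multiset.card m : ℝ≥0∞)⁻¹ ≠ 0 :=
    ENNReal.inv_ne_zero.2 (ENNReal.natCast_ne_top _)
  have hinv_ne_top : (Multiset.card m : ℝ≥0∞)⁻¹ ≠ ⊤ :=
    ENNReal.inv_ne_top.2 (by exact_mod_cast hcard)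
  rw [evCost, if_neg hcard, ENNReal.mul_ne_top_iff_right hinv_ne_zero hinv_ne_top,
    ENNReal.multiset_sum_map_ne_top_iff]
  simp only [sum_medist_ne_top_iff]
  refine ⟨fun h => ⟨fun v => ?_, h⟩, And.right⟩
  obtain ⟨e, he⟩ := Multiset.exists_mem_of_ne_zero hm
  obtain ⟨k, hk⟩ := h e he v
  exact ⟨k, walkLen_mono (fun _ _ => Multiset.mem_of_mem_erase) k u v hk⟩

lemma evCost_ne_top_of_two_le_count {V : Type*} [DecidableEq V] [Fintype V]
    {m : Multiset (Sym2 V)} {u : V} (h : ∀ v, v ≠ u → 2 ≤ m.count s(u, v)) :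
    evCost m u ≠ ⊤ :=
  (evCost_ne_top_iff m u).2
    ⟨exists_walkLen_of_forall_mem fun v hv =>
        Multiset.one_le_count_iff_mem.1 (one_le_two.trans (h v hv)),
      fun e _ => exists_walkLen_of_forall_mem fun v hv =>
        Multiset.mem_erase_of_two_le_count (h v hv) e⟩

lemma map_le_edgeMS {n : ℕ} (s : Fin n → Multiset (Fin n)) (u : Fin n) :
    (s u).map (fun v => s(u, v)) ≤ edgeMS s :=
  Finset.single_le_sum (f := fun w => (s w).map fun v => s(w, v))
    (fun _ _ => Multiset.zero_le _) (Finset.mem_univ u)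

def doubleStar {V : Type*} [Fintype V] [DecidableEq V] (u : V) : Multiset V :=
  2 • (Finset.univ.erase u).val

lemma notMem_doubleStar {V : Type*} [Fintype V] [DecidableEq V] (u : V) :
    u ∉ doubleStar u := by
  rw [doubleStar, Multiset.mem_nsmul_of_ne_zero two_ne_zero]
  exact Finset.notMem_erase u Finset.univ

lemma count_doubleStar {V : Type*} [Fintype V] [DecidableEq V] {u v : V} (hv : v ≠ u) :
    (doubleStar u).count v = 2 := by
  simp [doubleStar, hv]

lemma two_le_count_edgeMS_update_doubleStar {n : ℕ} (s : Fin n → Multiset (Fin n))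
    {u v : Fin n} (hv : v ≠ u) :
    2 ≤ (edgeMS (Function.update s u (doubleStar u))).count s(u, v) :=
  calc 2 = (doubleStar u).count v := (count_doubleStar hv).symm
    _ = ((doubleStar u).map fun w => s(u, w)).count s(u, v) :=
      (Multiset.count_map_eq_count' _ _ (fun _ _ => Sym2.congr_right.1) v).symm
    _ ≤ _ := Multiset.count_le_of_le _ <| by
      simpa using map_le_edgeMS (Function.update s u (doubleStar u)) u

theorem IsNE.evCost_ne_top {n : ℕ} {α : ℝ≥0∞} {s : Fin n → Multiset (Fin n)}
    (hNE : IsNE α s) (hα : α ≠ ⊤) (u : Fin n) : evCost (edgeMS s) u ≠ ⊤ := by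
  have hdev : agentCost α (Function.update s u (doubleStar u)) u ≠ ⊤ :=
    ENNReal.add_ne_top.2 ⟨ENNReal.mul_ne_top hα (ENNReal.natCast_ne_top _),
      evCost_ne_top_of_two_le_count fun _ => two_le_count_edgeMS_update_doubleStar s⟩
  have hcost : agentCost α s u ≠ ⊤ :=
    ne_top_of_le_ne_top hdev (hNE u _ (notMem_doubleStar u))
  exact (ENNReal.add_ne_top.1 hcost).2

theorem NE_twoEdgeConnected_general {n : ℕ} (α : ℝ≥0∞) (hα : α ≠ ⊤)
    (s : Fin n → Multiset (Fin n)) (hNE : IsNE α s) :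
    mConnected (edgeMS s) ∧ ∀ e ∈ edgeMS s, mConnected ((edgeMS s).erase e) := by
  have hreach := fun u => (evCost_ne_top_iff (edgeMS s) u).1 (hNE.evCost_ne_top hα u)
  exact ⟨fun u => (hreach u).1, fun e he u => (hreach u).2 e he⟩

/-- Every pure Nash equilibrium network of the adversarial network creation game with
finite edge price `α` (and `n ≥ 3` agents) is 2-edge-connected: it is connected and
remains connected after removal of any single edge. -/
theorem NE_twoEdgeConnected {n : ℕ} (hn : 3 ≤ n) (α : ℝ≥0∞) (hα : α ≠ ⊤)
    (s : Fin n → Multiset (Fin n)) (hown : ∀ u : Fin n, u ∉ s u) (hNE : IsNE α s) :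
    mConnected (edgeMS s) ∧ ∀ e ∈ edgeMS s, mConnected ((edgeMS s).erase e) :=
  NE_twoEdgeConnected_general α hα s hNE
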